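/- arXiv:2511.12871 — 5 statements merged into one kernel-verified Lean document; each statement's English description precedes it below -/
import Mathlib

section
/- Let H be a group in which the centralizer of every nontrivial element is infinite cyclic, and suppose every group homomorphism from H to Z is trivial. Then for every k ≥ 1, every subgroup of H × Z^k that is the fixed subgroup of some endomorphism of H × Z^k is isomorphic either to Z^s for some s ≤ k+1, or to N × Z^s where s ≤ k and N is the fixed subgroup of some endomorphism of H. -/
/-- The fixed subgroup of an endomorphism `φ` of a group `G`. -/
def fixedSubgroup {G : Type*} [Group G] (φ : G →* G) : Subgroup G where
  carrier := {x | φ x = x}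
  one_mem' := by simp
  mul_mem' := by
    intro a b ha hb
    simp only [Set.mem_setOf_eq, map_mul] at *
    rw [ha, hb]
  inv_mem' := by
    intro a ha
    simp only [Set.mem_setOf_eq, map_inv] at *
    rw [ha]

/-- A subgroup `H` of `G` is end-fixed up to isomorphism if `H ≅ Fix φ`
for some endomorphism `φ` of `G`. -/
def IsEndFixed {G : Type*} [Group G] (H : Subgroup G) : Prop :=
  ∃ φ : G →* G, Nonempty (H ≃* fixedSubgroup φ)

/-- A subgroup `H` of `G` is aut-fixed up to isomorphism if `H ≅ Fix φ`
for some automorphism `φ` of `G`. -/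
def IsAutFixed {G : Type*} [Group G] (H : Subgroup G) : Prop :=
  ∃ φ : G ≃* G, Nonempty (H ≃* fixedSubgroup φ.toMonoidHom)

/-- The free abelian group `ℤ^m` of rank `m`, written multiplicatively. -/
abbrev ZPow' (m : ℕ) := Multiplicative (Fin m → ℤ)

/-!
Since every homomorphism `H → ℤ^k` is trivial, an endomorphism of `H × ℤ^k` has the shape
`Ψ (h, z) = (φ h * β z, γ z)` (here `left`, `cross`, `right`), and `φ h` commutes with `β z`.
If `β = 1` then `Fix Ψ = Fix φ × Fix γ`. Otherwise some `c = β z₀` is nontrivial, and each fixed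
`(h, z)` has `h = φ h * β z` in the centralizer of `c`, which is infinite cyclic; so `Fix Ψ`
embeds in `ℤ × ℤ^k`. Either way the free abelian factor is a subgroup of a free abelian group of
finite rank.
-/

@[simp]
lemma mem_fixedSubgroup {G : Type*} [Group G] {φ : G →* G} {x : G} :
    x ∈ fixedSubgroup φ ↔ φ x = x :=
  Iff.rfl

lemma AddSubgroup.exists_addEquiv_fin_arrow_int (m : ℕ) (B : AddSubgroup (Fin m → ℤ)) :
    ∃ s ≤ m, Nonempty (B ≃+ (Fin s → ℤ)) := by
  let S := AddSubgroup.toIntSubmodule B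
  exact ⟨Module.finrank ℤ S, by simpa using Submodule.finrank_le S,
    ⟨(Module.finBasis ℤ S).equivFun.toAddEquiv⟩⟩

lemma exists_mulEquiv_zpow_of_injective {G : Type*} [Group G] {m : ℕ} (f : G →* ZPow' m)
    (hf : Function.Injective f) : ∃ s ≤ m, Nonempty (G ≃* ZPow' s) := by
  let f' := MonoidHom.toAdditiveLeft f
  obtain ⟨s, hs, ⟨e⟩⟩ := AddSubgroup.exists_addEquiv_fin_arrow_int m f'.range
  exact ⟨s, hs, ⟨AddEquiv.toMultiplicativeRight
    ((AddMonoidHom.ofInjective (f := f') fun a b hab =>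
      hf (Multiplicative.toAdd.injective hab)).trans e)⟩⟩

lemma exists_mulEquiv_zpow_succ_of_injective {G : Type*} [Group G] {k : ℕ}
    (f : G →* Multiplicative ℤ × ZPow' k) (hf : Function.Injective f) :
    ∃ s ≤ k + 1, Nonempty (G ≃* ZPow' s) :=
  let e : Multiplicative ℤ × ZPow' k ≃* ZPow' (k + 1) :=
    (MulEquiv.prodMultiplicative (G := ℤ) (H := Fin k → ℤ)).symm.trans
      (AddEquiv.toMultiplicative (Fin.consLinearEquiv ℤ (fun _ => ℤ)).toAddEquiv)
  exists_mulEquiv_zpow_of_injective (e.toMonoidHom.comp f) (e.injective.comp hf)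

lemma MonoidHom.eq_one_of_forall_hom_int_eq_one {H ι : Type*} [Group H]
    (htriv : ∀ f : H →* Multiplicative ℤ, f = 1) (f : H →* Multiplicative (ι → ℤ)) : f = 1 := by
  ext h i
  have := DFunLike.congr_fun
    (htriv ((Pi.evalAddMonoidHom (fun _ => ℤ) i).toMultiplicative.comp f)) h
  simpa using congrArg Multiplicative.toAdd this

namespace ProdEnd

section

variable {H A : Type*} [Group H] [Group A] (Ψ : H × A →* H × A)

def left : H →* H := (MonoidHom.fst H A).comp (Ψ.comp (MonoidHom.inl H A))

def cross : A →* H := (MonoidHom.fst H A).comp (Ψ.comp (MonoidHom.inr H A))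

def right : A →* A := (MonoidHom.snd H A).comp (Ψ.comp (MonoidHom.inr H A))

lemma commute_left_cross (h : H) (z : A) : Commute (left Ψ h) (cross Ψ z) := by
  have hcomm : Commute (Ψ (h, 1)) (Ψ (1, z)) :=
    (MonoidHom.commute_inl_inr h z).map Ψ
  exact congrArg Prod.fst hcomm

variable {Ψ}

lemma apply_eq (htriv : ∀ f : H →* A, f = 1) (h : H) (z : A) :
    Ψ (h, z) = (left Ψ h * cross Ψ z, right Ψ z) := by
  have hsnd : (Ψ (h, 1)).2 = 1 :=
    DFunLike.congr_fun (htriv ((MonoidHom.snd H A).comp (Ψ.comp (MonoidHom.inl H A)))) h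
  rw [← Prod.fst_mul_snd (h, z), map_mul]
  ext <;> simp [left, cross, right, hsnd]

lemma mem_fixedSubgroup_iff (htriv : ∀ f : H →* A, f = 1) (x : H × A) :
    x ∈ fixedSubgroup Ψ ↔ left Ψ x.1 * cross Ψ x.2 = x.1 ∧ right Ψ x.2 = x.2 := by
  change Ψ x = x ↔ _
  rw [← Prod.mk.eta (p := x), apply_eq htriv, Prod.ext_iff]

def fixedSubgroupMulEquivProd (htriv : ∀ f : H →* A, f = 1) (hcross : cross Ψ = 1) :
    fixedSubgroup Ψ ≃* fixedSubgroup (left Ψ) × fixedSubgroup (right Ψ) where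
  toFun x :=
    have hx := (mem_fixedSubgroup_iff htriv _).1 x.2
    (⟨x.1.1, by simpa [hcross] using hx.1⟩, ⟨x.1.2, hx.2⟩)
  invFun p := ⟨(p.1, p.2), (mem_fixedSubgroup_iff htriv _).2
    ⟨by simpa [hcross] using mem_fixedSubgroup.1 p.1.2, p.2.2⟩⟩
  left_inv _ := rfl
  right_inv _ := rfl
  map_mul' _ _ := rfl

end

section

variable {H A : Type*} [Group H] [CommGroup A] {Ψ : H × A →* H × A}

lemma fst_mem_centralizer_cross (htriv : ∀ f : H →* A, f = 1) {x : H × A}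
    (hx : x ∈ fixedSubgroup Ψ) (z : A) :
    x.1 ∈ Subgroup.centralizer {cross Ψ z} := by
  rw [← ((mem_fixedSubgroup_iff htriv x).1 hx).1, Subgroup.mem_centralizer_singleton_iff]
  exact ((commute_left_cross Ψ x.1 z).mul_left ((Commute.all x.2 z).map (cross Ψ))).eq

def fixedSubgroupToCentralizerProd (htriv : ∀ f : H →* A, f = 1) (z : A) :
    fixedSubgroup Ψ →* Subgroup.centralizer {cross Ψ z} × A :=
  (((MonoidHom.fst H A).comp (fixedSubgroup Ψ).subtype).codRestrict _
    fun x => fst_mem_centralizer_cross htriv x.2 z).prod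
    ((MonoidHom.snd H A).comp (fixedSubgroup Ψ).subtype)

lemma fixedSubgroupToCentralizerProd_injective (htriv : ∀ f : H →* A, f = 1) (z : A) :
    Function.Injective (fixedSubgroupToCentralizerProd (Ψ := Ψ) htriv z) := by
  intro x y hxy
  rw [Prod.ext_iff, Subtype.ext_iff] at hxy
  exact Subtype.ext (Prod.ext hxy.1 hxy.2)

end

end ProdEnd

theorem stmt5_general (H : Type*) [Group H]
    (hcent : ∀ x : H, x ≠ 1 →
      Nonempty (Subgroup.centralizer ({x} : Set H) ≃* Multiplicative ℤ))
    (htriv : ∀ f : H →* Multiplicative ℤ, f = 1)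
    (k : ℕ)
    (Ψ : (H × ZPow' k) →* (H × ZPow' k)) :
    (∃ s ≤ k + 1, Nonempty (fixedSubgroup Ψ ≃* ZPow' s)) ∨
    (∃ s ≤ k, ∃ φ : H →* H,
      Nonempty (fixedSubgroup Ψ ≃* (fixedSubgroup φ × ZPow' s))) := by
  have htrivk : ∀ f : H →* ZPow' k, f = 1 := MonoidHom.eq_one_of_forall_hom_int_eq_one htriv
  by_cases hcross : ProdEnd.cross Ψ = 1
  · obtain ⟨s, hs, ⟨e⟩⟩ := exists_mulEquiv_zpow_of_injective _
      (fixedSubgroup (ProdEnd.right Ψ)).subtype_injective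
    exact .inr ⟨s, hs, ProdEnd.left Ψ,
      ⟨(ProdEnd.fixedSubgroupMulEquivProd htrivk hcross).trans ((MulEquiv.refl _).prodCongr e)⟩⟩
  · obtain ⟨z, hz⟩ := DFunLike.ne_iff.1 hcross
    obtain ⟨e⟩ := hcent _ hz
    let e' := e.prodCongr (MulEquiv.refl (ZPow' k))
    exact .inl (exists_mulEquiv_zpow_succ_of_injective
      (e'.toMonoidHom.comp (ProdEnd.fixedSubgroupToCentralizerProd htrivk z))
      (e'.injective.comp (ProdEnd.fixedSubgroupToCentralizerProd_injective htrivk z)))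

theorem stmt5 (H : Type*) [Group H]
    (hcent : ∀ x : H, x ≠ 1 →
      Nonempty (Subgroup.centralizer ({x} : Set H) ≃* Multiplicative ℤ))
    (htriv : ∀ f : H →* Multiplicative ℤ, f = 1)
    (k : ℕ) (hk : 1 ≤ k)
    (Ψ : (H × ZPow' k) →* (H × ZPow' k)) :
    (∃ s ≤ k + 1, Nonempty (fixedSubgroup Ψ ≃* ZPow' s)) ∨
    (∃ s ≤ k, ∃ φ : H →* H,
      Nonempty (fixedSubgroup Ψ ≃* (fixedSubgroup φ × ZPow' s))) :=
  stmt5_general H hcent htriv k Ψ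
end

section
/- Let n ≥ 2, m ≥ 1, let φ be an endomorphism of F_n, Q an m×m integer matrix, P an n×m integer matrix, and let Ψ = Ψ_{φ,Q,P} be the endomorphism of F_n × Z^m sending u t^a to φ(u) t^{aQ+uP}. Set K = {u ∈ Fix φ | there exists a ∈ Z^m with a = aQ + uP} and A = {a ∈ Z^m | a = aQ}. Then K is a normal subgroup of Fix φ, A ≅ Z^s for some s ≤ m, and Fix Ψ ≅ K × A ≅ K × Z^s. -/
/-- The free abelian group `ℤ^m` of rank `m`, written multiplicatively. -/
abbrev ZPowGrp (m : ℕ) := Multiplicative (Fin m → ℤ)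

/-- The abelianization homomorphism of the free group `F_n`, with values in `ℤ^n`. -/
def freeAb (n : ℕ) : FreeGroup (Fin n) →* Multiplicative (Fin n → ℤ) :=
  FreeGroup.lift fun i => Multiplicative.ofAdd (Pi.single i 1)

/-- The abelianization vector (vector of exponent sums) of a word `u ∈ F_n`. -/
def freeVec {n : ℕ} (u : FreeGroup (Fin n)) : Fin n → ℤ :=
  Multiplicative.toAdd (freeAb n u)

lemma freeVec_one {n : ℕ} : freeVec (1 : FreeGroup (Fin n)) = 0 := by
  simp [freeVec]

lemma freeVec_mul {n : ℕ} (u v : FreeGroup (Fin n)) :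
    freeVec (u * v) = freeVec u + freeVec v := by
  simp [freeVec, map_mul]

lemma freeVec_inv {n : ℕ} (u : FreeGroup (Fin n)) : freeVec u⁻¹ = -freeVec u := by
  simp [freeVec, map_inv]

/-- The subgroup `K = {u ∈ Fix φ | ∃ a ∈ ℤ^m, a = aQ + uP}` of `F_n`. -/
def Kgrp (n m : ℕ) (φ : FreeGroup (Fin n) →* FreeGroup (Fin n))
    (Q : Matrix (Fin m) (Fin m) ℤ) (P : Matrix (Fin n) (Fin m) ℤ) :
    Subgroup (FreeGroup (Fin n)) where
  carrier := {u | φ u = u ∧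
    ∃ a : Fin m → ℤ, a = Matrix.vecMul a Q + Matrix.vecMul (freeVec u) P}
  one_mem' := ⟨map_one φ, 0, by simp [freeVec_one, Matrix.zero_vecMul]⟩
  mul_mem' := by
    rintro u v ⟨hu, au, hau⟩ ⟨hv, av, hav⟩
    refine ⟨by rw [map_mul, hu, hv], au + av, ?_⟩
    conv_lhs => rw [hau, hav]
    rw [freeVec_mul, Matrix.add_vecMul, Matrix.add_vecMul]
    abel
  inv_mem' := by
    rintro u ⟨hu, au, hau⟩
    refine ⟨by rw [map_inv, hu], -au, ?_⟩
    conv_lhs => rw [hau]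
    rw [freeVec_inv, Matrix.neg_vecMul, Matrix.neg_vecMul]
    abel

/-- The subgroup `A = {a ∈ ℤ^m | a = aQ}` of `ℤ^m`. -/
def Agrp (m : ℕ) (Q : Matrix (Fin m) (Fin m) ℤ) : Subgroup (ZPowGrp m) where
  carrier := {a | Multiplicative.toAdd a = Matrix.vecMul (Multiplicative.toAdd a) Q}
  one_mem' := by simp [Matrix.zero_vecMul]
  mul_mem' := by
    intro a b ha hb
    simp only [Set.mem_setOf_eq, toAdd_mul] at *
    rw [Matrix.add_vecMul, ← ha, ← hb]
  inv_mem' := by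
    intro a ha
    simp only [Set.mem_setOf_eq, toAdd_inv] at *
    rw [Matrix.neg_vecMul, ← ha]

open Matrix

section SplitCentralExtension

variable {G H : Type*} [Group G] [Group H]

theorem IsFreeGroup.exists_rightInverse [IsFreeGroup H] {π : G →* H}
    (hπ : Function.Surjective π) : ∃ σ : H →* G, Function.RightInverse σ π := by
  let σ : H →* G := IsFreeGroup.lift fun x => (hπ (IsFreeGroup.of x)).choose
  have hσ : π.comp σ = MonoidHom.id H :=
    IsFreeGroup.ext_hom fun x => by simp [σ, (hπ _).choose_spec]
  exact ⟨σ, DFunLike.congr_fun hσ⟩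

def MonoidHom.prodKerEquivOfRightInverse (π : G →* H) (σ : H →* G)
    (hσ : Function.RightInverse σ π) (hcenter : π.ker ≤ Subgroup.center G) :
    G ≃* H × π.ker where
  toFun g := (π g, ⟨(σ (π g))⁻¹ * g, by simp [MonoidHom.mem_ker, hσ (π g)]⟩)
  invFun p := σ p.1 * p.2
  left_inv g := by simp
  right_inv p := by
    have hp : π p.2 = 1 := p.2.2
    ext <;> simp [hp, hσ p.1]
  map_mul' g h := by
    have hg : (σ (π g))⁻¹ * g ∈ Subgroup.center G :=
      hcenter (by simp [MonoidHom.mem_ker, hσ (π g)])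
    ext
    · simp
    · show (σ (π (g * h)))⁻¹ * (g * h) = (σ (π g))⁻¹ * g * ((σ (π h))⁻¹ * h)
      rw [map_mul, map_mul, _root_.mul_inv_rev, mul_assoc, ← mul_assoc _ g, ← mul_assoc,
        Subgroup.mem_center_iff.1 hg]
      simp only [mul_assoc]

end SplitCentralExtension

theorem Subgroup.exists_mulEquiv_zPowGrp {m : ℕ} (A : Subgroup (ZPowGrp m)) :
    ∃ s ≤ m, Nonempty (A ≃* ZPowGrp s) := by
  let N := AddSubgroup.toIntSubmodule (Subgroup.toAddSubgroup' A)
  let eN : A ≃* Multiplicative N :=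
    { toFun a := Multiplicative.ofAdd ⟨Multiplicative.toAdd a.1, a.2⟩
      invFun b := ⟨Multiplicative.ofAdd (Multiplicative.toAdd b).1, (Multiplicative.toAdd b).2⟩
      left_inv _ := rfl
      right_inv _ := rfl
      map_mul' _ _ := rfl }
  refine ⟨Module.finrank ℤ N, ?_,
    ⟨eN.trans (Module.finBasis ℤ N).equivFun.toAddEquiv.toMultiplicative⟩⟩
  simpa using N.finrank_le

theorem freeVec_conj {n : ℕ} (g u : FreeGroup (Fin n)) :
    freeVec (g * u * g⁻¹) = freeVec u := by
  rw [freeVec_mul, freeVec_mul, freeVec_inv, add_neg_cancel_comm]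

theorem Kgrp_subgroupOf_fixedSubgroup_normal {n m : ℕ}
    (φ : FreeGroup (Fin n) →* FreeGroup (Fin n)) (Q : Matrix (Fin m) (Fin m) ℤ)
    (P : Matrix (Fin n) (Fin m) ℤ) :
    ((Kgrp n m φ Q P).subgroupOf (fixedSubgroup φ)).Normal where
  conj_mem u hu g := by
    obtain ⟨hφu, a, ha⟩ := Subgroup.mem_subgroupOf.1 hu
    have hφg : φ g = g := g.2
    refine Subgroup.mem_subgroupOf.2 ⟨?_, a, ?_⟩
    · simp only [Subgroup.coe_mul, Subgroup.coe_inv, map_mul, map_inv, hφu, hφg]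
    · simpa only [Subgroup.coe_mul, Subgroup.coe_inv, freeVec_conj] using ha

section FixedSubgroup

variable {n m : ℕ} {φ : FreeGroup (Fin n) →* FreeGroup (Fin n)}
  {Q : Matrix (Fin m) (Fin m) ℤ} {P : Matrix (Fin n) (Fin m) ℤ}
  {Ψ : (FreeGroup (Fin n) × ZPowGrp m) →* (FreeGroup (Fin n) × ZPowGrp m)}
  (hΨ : ∀ x : FreeGroup (Fin n) × ZPowGrp m,
    Ψ x = (φ x.1, Multiplicative.ofAdd
      (vecMul (Multiplicative.toAdd x.2) Q + vecMul (freeVec x.1) P)))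
include hΨ

theorem mem_fixedSubgroup_iff_of_apply_eq {x : FreeGroup (Fin n) × ZPowGrp m} :
    x ∈ fixedSubgroup Ψ ↔ φ x.1 = x.1 ∧
      Multiplicative.toAdd x.2 = vecMul (Multiplicative.toAdd x.2) Q + vecMul (freeVec x.1) P := by
  change Ψ x = x ↔ _
  rw [hΨ, Prod.ext_iff, eq_comm (b := x.2)]
  rfl

def fixedSubgroupToKgrp : fixedSubgroup Ψ →* Kgrp n m φ Q P :=
  ((MonoidHom.fst _ _).comp (fixedSubgroup Ψ).subtype).codRestrict _ fun x =>
    have hx := (mem_fixedSubgroup_iff_of_apply_eq hΨ).1 x.2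
    ⟨hx.1, _, hx.2⟩

theorem fixedSubgroupToKgrp_surjective : Function.Surjective (fixedSubgroupToKgrp hΨ) := by
  rintro ⟨u, hφu, a, ha⟩
  exact ⟨⟨(u, Multiplicative.ofAdd a),
    (mem_fixedSubgroup_iff_of_apply_eq hΨ).2 ⟨hφu, ha⟩⟩, rfl⟩

theorem fst_eq_one_of_mem_ker_fixedSubgroupToKgrp {x : fixedSubgroup Ψ}
    (hx : x ∈ (fixedSubgroupToKgrp hΨ).ker) :
    (x : FreeGroup (Fin n) × ZPowGrp m).1 = 1 :=
  congrArg Subtype.val hx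

theorem ker_fixedSubgroupToKgrp_le_center :
    (fixedSubgroupToKgrp hΨ).ker ≤ Subgroup.center (fixedSubgroup Ψ) := fun x hx =>
  Subgroup.mem_center_iff.2 fun y => Subtype.ext <| Prod.ext
    (by simp [fst_eq_one_of_mem_ker_fixedSubgroupToKgrp hΨ hx]) (mul_comm _ _)

def kerFixedSubgroupToKgrpEquiv : (fixedSubgroupToKgrp hΨ).ker ≃* Agrp m Q where
  toFun x := ⟨(x : FreeGroup (Fin n) × ZPowGrp m).2, by
    have hx := ((mem_fixedSubgroup_iff_of_apply_eq hΨ).1 x.1.2).2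
    rwa [fst_eq_one_of_mem_ker_fixedSubgroupToKgrp hΨ x.2, freeVec_one, zero_vecMul,
      add_zero] at hx⟩
  invFun a := ⟨⟨(1, a), (mem_fixedSubgroup_iff_of_apply_eq hΨ).2
    ⟨map_one φ, by rw [freeVec_one, zero_vecMul, add_zero]; exact a.2⟩⟩, rfl⟩
  left_inv x := Subtype.ext <| Subtype.ext <|
    Prod.ext (fst_eq_one_of_mem_ker_fixedSubgroupToKgrp hΨ x.2).symm rfl
  right_inv _ := rfl
  map_mul' _ _ := rfl

end FixedSubgroup

theorem stmt7_general (n m : ℕ)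
    (φ : FreeGroup (Fin n) →* FreeGroup (Fin n))
    (Q : Matrix (Fin m) (Fin m) ℤ) (P : Matrix (Fin n) (Fin m) ℤ)
    (Ψ : (FreeGroup (Fin n) × ZPowGrp m) →* (FreeGroup (Fin n) × ZPowGrp m))
    (hΨ : ∀ x : FreeGroup (Fin n) × ZPowGrp m,
      Ψ x = (φ x.1, Multiplicative.ofAdd
        (Matrix.vecMul (Multiplicative.toAdd x.2) Q + Matrix.vecMul (freeVec x.1) P))) :
    Kgrp n m φ Q P ≤ fixedSubgroup φ ∧
    ((Kgrp n m φ Q P).subgroupOf (fixedSubgroup φ)).Normal ∧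
    ∃ s ≤ m, Nonempty (Agrp m Q ≃* ZPowGrp s) ∧
      Nonempty (fixedSubgroup Ψ ≃* (Kgrp n m φ Q P × Agrp m Q)) ∧
      Nonempty (fixedSubgroup Ψ ≃* (Kgrp n m φ Q P × ZPowGrp s)) := by
  obtain ⟨σ, hσ⟩ := IsFreeGroup.exists_rightInverse (fixedSubgroupToKgrp_surjective hΨ)
  let eKA : fixedSubgroup Ψ ≃* Kgrp n m φ Q P × Agrp m Q :=
    ((fixedSubgroupToKgrp hΨ).prodKerEquivOfRightInverse σ hσ
      (ker_fixedSubgroupToKgrp_le_center hΨ)).trans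
      ((MulEquiv.refl _).prodCongr (kerFixedSubgroupToKgrpEquiv hΨ))
  obtain ⟨s, hsm, ⟨eA⟩⟩ := (Agrp m Q).exists_mulEquiv_zPowGrp
  exact ⟨fun _ hu => hu.1, Kgrp_subgroupOf_fixedSubgroup_normal φ Q P, s, hsm, ⟨eA⟩,
    ⟨eKA⟩, ⟨eKA.trans ((MulEquiv.refl _).prodCongr eA)⟩⟩

theorem stmt7 (n m : ℕ) (hn : 2 ≤ n) (hm : 1 ≤ m)
    (φ : FreeGroup (Fin n) →* FreeGroup (Fin n))
    (Q : Matrix (Fin m) (Fin m) ℤ) (P : Matrix (Fin n) (Fin m) ℤ)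
    (Ψ : (FreeGroup (Fin n) × ZPowGrp m) →* (FreeGroup (Fin n) × ZPowGrp m))
    (hΨ : ∀ x : FreeGroup (Fin n) × ZPowGrp m,
      Ψ x = (φ x.1, Multiplicative.ofAdd
        (Matrix.vecMul (Multiplicative.toAdd x.2) Q + Matrix.vecMul (freeVec x.1) P))) :
    Kgrp n m φ Q P ≤ fixedSubgroup φ ∧
    ((Kgrp n m φ Q P).subgroupOf (fixedSubgroup φ)).Normal ∧
    ∃ s ≤ m, Nonempty (Agrp m Q ≃* ZPowGrp s) ∧
      Nonempty (fixedSubgroup Ψ ≃* (Kgrp n m φ Q P × Agrp m Q)) ∧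
      Nonempty (fixedSubgroup Ψ ≃* (Kgrp n m φ Q P × ZPowGrp s)) :=
  stmt7_general n m φ Q P Ψ hΨ
end

section
/- Let n ≥ 2 and t > n. Let F_n be free on x_1,…,x_n, let φ: F_n → F_n be the endomorphism with φ(x_1) = x_1, φ(x_2) = x_2, and φ(x_i) = x_i^{-1} for i > 2, and let γ(u) denote the exponent sum of x_1 in u. Then the endomorphism Ψ of F_n × Z defined by Ψ(u, v) = (φ(u), tv + γ(u)) has fixed subgroup Fix Ψ isomorphic to the free group F_t of rank t. -/
/-- The free abelian group `ℤ^m` of rank `m`, written multiplicatively. -/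
abbrev ZPowFreeAb (m : ℕ) := Multiplicative (Fin m → ℤ)

/-!
`φ` acts letter by letter on reduced words (fixing the letters `x₀, x₁` and inverting all
others) and keeps them reduced, so `Fix φ` is the free factor `F₂ = ⟨x₀, x₁⟩`, and
`(u, v) ∈ Fix Ψ` iff `u ∈ F₂` and `γ u = (1 - t) v`. Hence `Fix Ψ ≅ {u ∈ F₂ | (t - 1) ∣ γ u}`,
a subgroup of index `m = t - 1`.

To see that this subgroup is free of rank `m + 1 = t`, let `F(ℤ) ⋊ₘ ℤ` be the semidirect
product in which `1 ∈ ℤ` shifts the basis `(y_j)` of `F(ℤ)` by `m`. Then `F_{m+1} ≅ F(ℤ) ⋊ₘ ℤ`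
via `x₀ ↦ 1 ∈ ℤ`, `x_{r+1} ↦ y_r`; for `m = 1` this identifies `F₂` with `F(ℤ) ⋊₁ ℤ` so that
`γ` becomes the `ℤ`-coordinate, and the subgroup above becomes
`F(ℤ) ⋊₁ mℤ ≅ F(ℤ) ⋊ₘ ℤ ≅ F_{m+1}`.
-/

open FreeGroup (of mk freeGroupCongr)
open SemidirectProduct Multiplicative

namespace FreeGroup

theorem mem_range_map_of_forall_mem_toWord {α β : Type*} [DecidableEq α] (f : β → α)
    {u : FreeGroup α} (h : ∀ x ∈ u.toWord, x.1 ∈ Set.range f) : u ∈ (map f).range := by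
  have hL : u.toWord ∈ Set.range (List.map fun y : β × Bool => (f y.1, y.2)) := by
    rw [Set.range_list_map]
    rintro ⟨a, b⟩ hx
    obtain ⟨c, rfl⟩ := h _ hx
    exact ⟨(c, b), rfl⟩
  obtain ⟨L, hL⟩ := hL
  exact ⟨mk L, by rw [map.mk, hL, mk_toWord]⟩

variable {α : Type*} (p : α → Prop) [DecidablePred p]

def flipLetter (x : α × Bool) : α × Bool := if p x.1 then x else (x.1, !x.2)

variable {p}

theorem isReduced_map_flipLetter {L : List (α × Bool)} (h : IsReduced L) :
    IsReduced (L.map (flipLetter p)) := by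
  refine List.isChain_map _ |>.2 <| h.imp fun {a b} hab => ?_
  unfold flipLetter
  split_ifs <;> intro h <;> simp_all

variable {φ : FreeGroup α →* FreeGroup α}

theorem apply_mk_singleton_of_eq_ite (hφ : ∀ i, φ (of i) = if p i then of i else (of i)⁻¹)
    (x : α × Bool) : φ (mk [x]) = mk [flipLetter p x] := by
  have hinv (i : α) : mk [(i, false)] = (of i)⁻¹ := by simp [of, inv_mk, invRev]
  obtain ⟨i, _ | _⟩ := x <;> by_cases hi : p i <;>
    simp [flipLetter, hi, hφ, hinv, ← of.eq_def]

theorem apply_mk_of_eq_ite (hφ : ∀ i, φ (of i) = if p i then of i else (of i)⁻¹)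
    (L : List (α × Bool)) : φ (mk L) = mk (L.map (flipLetter p)) := by
  induction L with
  | nil => exact _root_.map_one φ
  | cons x L ih =>
    rw [← List.singleton_append, ← mul_mk, _root_.map_mul, ih, List.map_append, ← mul_mk,
      List.map_singleton, apply_mk_singleton_of_eq_ite hφ]

theorem toWord_apply_of_eq_ite [DecidableEq α]
    (hφ : ∀ i, φ (of i) = if p i then of i else (of i)⁻¹) (u : FreeGroup α) :
    (φ u).toWord = u.toWord.map (flipLetter p) := by
  conv_lhs => rw [← mk_toWord (x := u)]
  rw [apply_mk_of_eq_ite hφ, toWord_mk, (isReduced_map_flipLetter isReduced_toWord).reduce_eq]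

theorem apply_eq_self_iff_of_eq_ite [DecidableEq α]
    (hφ : ∀ i, φ (of i) = if p i then of i else (of i)⁻¹) (u : FreeGroup α) :
    φ u = u ↔ ∀ x ∈ u.toWord, p x.1 := by
  conv_lhs => rw [← toWord_inj, toWord_apply_of_eq_ite hφ]; rhs; rw [← List.map_id u.toWord]
  rw [List.map_eq_map_iff]
  refine forall₂_congr fun x _ => ?_
  by_cases hx : p x.1 <;> simp [flipLetter, hx, Prod.ext_iff]

end FreeGroup

def shiftAut : Multiplicative ℤ →* MulAut (FreeGroup ℤ) where
  toFun n := freeGroupCongr (Equiv.addRight n.toAdd)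
  map_one' := MulEquiv.toMonoidHom_injective <| FreeGroup.ext_hom _ _ fun j => by simp
  map_mul' a b := MulEquiv.toMonoidHom_injective <| FreeGroup.ext_hom _ _ fun j => by
    simp [add_assoc, add_comm (toAdd b)]

@[simp] theorem shiftAut_apply_of (n : Multiplicative ℤ) (j : ℤ) :
    shiftAut n (of j) = of (j + n.toAdd) := by
  simp [shiftAut]

abbrev ShiftSemidirect (m : ℤ) := FreeGroup ℤ ⋊[shiftAut.comp (zpowGroupHom m)] Multiplicative ℤ

def scaleShiftSemidirect (m : ℤ) : ShiftSemidirect m →* ShiftSemidirect 1 :=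
  SemidirectProduct.map (MonoidHom.id _) (zpowGroupHom m) fun g => by simp

@[simp] theorem scaleShiftSemidirect_left (m : ℤ) (p : ShiftSemidirect m) :
    (scaleShiftSemidirect m p).left = p.left := rfl

@[simp] theorem scaleShiftSemidirect_right (m : ℤ) (p : ShiftSemidirect m) :
    (scaleShiftSemidirect m p).right = p.right ^ m := rfl

theorem scaleShiftSemidirect_injective {m : ℤ} (hm : m ≠ 0) :
    Function.Injective (scaleShiftSemidirect m) := fun p q h => by
  have hr := congrArg (toAdd ∘ right) h
  simp only [Function.comp_apply, scaleShiftSemidirect_right, toAdd_zpow, smul_eq_mul] at hr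
  exact SemidirectProduct.ext (by simpa using congrArg left h)
    (toAdd.injective (mul_left_cancel₀ hm hr))

def toShiftSemidirect (m : ℕ) : FreeGroup (Fin (m + 1)) →* ShiftSemidirect m :=
  FreeGroup.lift (Fin.cases (inr (ofAdd 1)) fun r => inl (of (r : ℤ)))

@[simp] theorem toShiftSemidirect_of_zero (m : ℕ) :
    toShiftSemidirect m (of 0) = inr (ofAdd 1) := by
  simp [toShiftSemidirect]

@[simp] theorem toShiftSemidirect_of_succ {m : ℕ} (r : Fin m) :
    toShiftSemidirect m (of r.succ) = inl (of (r : ℤ)) := by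
  simp [toShiftSemidirect]

section

variable (m : ℕ) [NeZero m]

def Int.emodFin (j : ℤ) : Fin m :=
  ⟨(j % m).toNat, (Int.toNat_lt (Int.emod_nonneg _ (by simp [NeZero.ne m]))).2
    (Int.emod_lt_of_pos _ (by simp [Nat.pos_of_neZero]))⟩

theorem Int.natCast_emodFin (j : ℤ) : ((Int.emodFin m j : ℕ) : ℤ) = j % m :=
  Int.toNat_of_nonneg (Int.emod_nonneg _ (by simp [NeZero.ne m]))

theorem Int.emodFin_natCast_val (r : Fin m) : Int.emodFin m r = r := by
  ext
  have h := Int.natCast_emodFin m r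
  rw [Int.emod_eq_of_lt (by positivity) (by exact_mod_cast r.isLt)] at h
  exact_mod_cast h

/-- The image in `F_{m+1}` of the basis element `y_j` of `F(ℤ)`. -/
def schreierGen (j : ℤ) : FreeGroup (Fin (m + 1)) :=
  of 0 ^ (j / m) * of (Int.emodFin m j).succ * (of 0 ^ (j / m))⁻¹

theorem schreierGen_add_mul (j n : ℤ) :
    schreierGen m (j + n * m) = of 0 ^ n * schreierGen m j * (of 0 ^ n)⁻¹ := by
  have hm : (m : ℤ) ≠ 0 := by simp [NeZero.ne m]
  have hdiv : (j + n * m) / m = j / m + n := by rw [mul_comm, Int.add_mul_ediv_left _ _ hm]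
  have hmod : Int.emodFin m (j + n * m) = Int.emodFin m j := by
    ext; simp [Int.emodFin, mul_comm n]
  simp only [schreierGen, hdiv, hmod, zpow_add]
  group

theorem schreierGen_natCast_val (r : Fin m) : schreierGen m r = of r.succ := by
  rw [schreierGen, Int.emodFin_natCast_val,
    Int.ediv_eq_zero_of_lt (by positivity) (by exact_mod_cast r.isLt)]
  group

def ofShiftSemidirect : ShiftSemidirect m →* FreeGroup (Fin (m + 1)) :=
  SemidirectProduct.lift (FreeGroup.lift (schreierGen m)) (zpowersHom _ (of 0)) fun n =>
    FreeGroup.ext_hom _ _ fun j => by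
      simp only [MonoidHom.comp_apply, MulEquiv.coe_toMonoidHom, zpowGroupHom_apply,
        shiftAut_apply_of, toAdd_zpow, smul_eq_mul, FreeGroup.lift_apply_of, zpowersHom_apply,
        MulAut.conj_apply]
      rw [mul_comm (m : ℤ), schreierGen_add_mul]

theorem toShiftSemidirect_schreierGen (j : ℤ) :
    toShiftSemidirect m (schreierGen m j) = inl (of j) := by
  rw [schreierGen, map_mul, map_mul, map_inv, map_zpow, toShiftSemidirect_of_zero,
    toShiftSemidirect_of_succ, ← map_zpow, ← map_inv, ← inl_aut]
  simp only [MonoidHom.comp_apply, zpowGroupHom_apply, shiftAut_apply_of, toAdd_zpow,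
    toAdd_ofAdd, smul_eq_mul, Int.natCast_emodFin]
  rw [mul_one, Int.emod_add_mul_ediv]

theorem ofShiftSemidirect_comp_toShiftSemidirect :
    (ofShiftSemidirect m).comp (toShiftSemidirect m) = MonoidHom.id _ :=
  FreeGroup.ext_hom _ _ fun i => by
    cases i using Fin.cases <;>
      simp [toShiftSemidirect, ofShiftSemidirect, schreierGen_natCast_val]

theorem toShiftSemidirect_comp_ofShiftSemidirect :
    (toShiftSemidirect m).comp (ofShiftSemidirect m) = MonoidHom.id _ := by
  refine SemidirectProduct.hom_ext (FreeGroup.ext_hom _ _ fun j => ?_) (MonoidHom.ext_mint ?_)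
  · simp [ofShiftSemidirect, toShiftSemidirect_schreierGen]
  · simp [ofShiftSemidirect, toShiftSemidirect]

def freeGroupEquivShiftSemidirect : FreeGroup (Fin (m + 1)) ≃* ShiftSemidirect m :=
  (toShiftSemidirect m).toMulEquiv (ofShiftSemidirect m)
    (ofShiftSemidirect_comp_toShiftSemidirect m) (toShiftSemidirect_comp_ofShiftSemidirect m)

end

theorem mem_fixedSubgroup_prod_iff {G : Type*} [Group G] {φ : G →* G}
    {γ : G →* Multiplicative ℤ} {t : ℤ} {Ψ : G × Multiplicative ℤ →* G × Multiplicative ℤ}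
    (hΨ : ∀ x, Ψ x = (φ x.1, ofAdd (t * toAdd x.2 + toAdd (γ x.1))))
    (x : G × Multiplicative ℤ) :
    x ∈ fixedSubgroup Ψ ↔ φ x.1 = x.1 ∧ toAdd (γ x.1) = (1 - t) * toAdd x.2 := by
  change Ψ x = x ↔ _
  rw [hΨ, Prod.ext_iff]
  refine and_congr_right fun _ => ?_
  rw [← toAdd.injective.eq_iff, toAdd_ofAdd]
  constructor <;> intro h <;> linarith

section

variable {n : ℕ} (hn : 2 ≤ n)

theorem comp_map_castLE_of_eq_ite {φ : FreeGroup (Fin n) →* FreeGroup (Fin n)}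
    (hφ : ∀ i : Fin n, φ (of i) = if (i : ℕ) ≤ 1 then of i else (of i)⁻¹) :
    φ.comp (FreeGroup.map (Fin.castLE hn)) = FreeGroup.map (Fin.castLE hn) :=
  FreeGroup.ext_hom _ _ fun i => by
    simp [hφ, show (i : ℕ) ≤ 1 from Nat.lt_succ_iff.1 i.isLt]

theorem mem_range_map_castLE_of_apply_eq_self {φ : FreeGroup (Fin n) →* FreeGroup (Fin n)}
    (hφ : ∀ i : Fin n, φ (of i) = if (i : ℕ) ≤ 1 then of i else (of i)⁻¹)
    {u : FreeGroup (Fin n)} (hu : φ u = u) : u ∈ (FreeGroup.map (Fin.castLE hn)).range :=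
  FreeGroup.mem_range_map_of_forall_mem_toWord _ fun x hx =>
    ⟨⟨x.1, Nat.lt_succ_of_le ((FreeGroup.apply_eq_self_iff_of_eq_ite hφ u).1 hu x hx)⟩, rfl⟩

theorem comp_map_castLE_eq_rightHom {γ : FreeGroup (Fin n) →* Multiplicative ℤ}
    (hγ : ∀ i : Fin n, γ (of i) = ofAdd (if (i : ℕ) = 0 then (1 : ℤ) else 0)) :
    γ.comp (FreeGroup.map (Fin.castLE hn)) =
      rightHom.comp (freeGroupEquivShiftSemidirect 1).toMonoidHom :=
  FreeGroup.ext_hom _ _ fun i => by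
    fin_cases i <;> simp [hγ] <;> rfl

def fixedSubgroupParam (m : ℕ) : ShiftSemidirect m →* FreeGroup (Fin n) × Multiplicative ℤ :=
  ((FreeGroup.map (Fin.castLE hn)).comp
      ((freeGroupEquivShiftSemidirect 1).symm.toMonoidHom.comp (scaleShiftSemidirect m))).prod
    (invMonoidHom.comp rightHom)

theorem fixedSubgroupParam_injective (m : ℕ) [NeZero m] :
    Function.Injective (fixedSubgroupParam hn m) :=
  .of_comp (f := Prod.fst) <| (FreeGroup.map_injective (Fin.castLE_injective hn)).comp <|
    (freeGroupEquivShiftSemidirect 1).symm.injective.comp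
      (scaleShiftSemidirect_injective (Nat.cast_ne_zero.2 (NeZero.ne m)))

theorem range_fixedSubgroupParam {m : ℕ} {φ : FreeGroup (Fin n) →* FreeGroup (Fin n)}
    (hφ : ∀ i : Fin n, φ (of i) = if (i : ℕ) ≤ 1 then of i else (of i)⁻¹)
    {γ : FreeGroup (Fin n) →* Multiplicative ℤ}
    (hγ : ∀ i : Fin n, γ (of i) = ofAdd (if (i : ℕ) = 0 then (1 : ℤ) else 0))
    {Ψ : FreeGroup (Fin n) × Multiplicative ℤ →* FreeGroup (Fin n) × Multiplicative ℤ}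
    (hΨ : ∀ x, Ψ x = (φ x.1, ofAdd (((m + 1 : ℕ) : ℤ) * toAdd x.2 + toAdd (γ x.1)))) :
    (fixedSubgroupParam hn m).range = fixedSubgroup Ψ := by
  set e := freeGroupEquivShiftSemidirect 1
  have hfix := DFunLike.congr_fun (comp_map_castLE_of_eq_ite hn hφ)
  have hexp := DFunLike.congr_fun (comp_map_castLE_eq_rightHom hn hγ)
  simp only [MonoidHom.comp_apply, MulEquiv.coe_toMonoidHom, rightHom_eq_right] at hfix hexp
  ext ⟨u, v⟩
  rw [mem_fixedSubgroup_prod_iff hΨ]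
  constructor
  · rintro ⟨p, hp⟩
    obtain ⟨rfl, rfl⟩ := Prod.ext_iff.1 hp
    refine ⟨hfix _, ?_⟩
    change toAdd (γ (FreeGroup.map _ (e.symm (scaleShiftSemidirect m p)))) = _ * toAdd p.right⁻¹
    rw [hexp, MulEquiv.apply_symm_apply, scaleShiftSemidirect_right, toAdd_zpow, toAdd_inv]
    push_cast
    ring
  · rintro ⟨hu, hγu⟩
    obtain ⟨w, rfl⟩ := mem_range_map_castLE_of_apply_eq_self hn hφ hu
    have hright : v⁻¹ ^ (m : ℤ) = (e w).right := by
      apply toAdd.injective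
      rw [← hexp, hγu, toAdd_zpow, toAdd_inv]
      push_cast
      ring
    have hscale : scaleShiftSemidirect m ⟨(e w).left, v⁻¹⟩ = e w :=
      SemidirectProduct.ext rfl hright
    refine ⟨⟨(e w).left, v⁻¹⟩, ?_⟩
    change (FreeGroup.map _ (e.symm (scaleShiftSemidirect m _)), v⁻¹⁻¹) = _
    rw [hscale, e.symm_apply_apply, inv_inv]

end

theorem stmt9 (n t : ℕ) (hn : 2 ≤ n) (ht : n < t)
    (φ : FreeGroup (Fin n) →* FreeGroup (Fin n))
    (hφ : ∀ i : Fin n, φ (FreeGroup.of i) =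
      if (i : ℕ) ≤ 1 then FreeGroup.of i else (FreeGroup.of i)⁻¹)
    (γ : FreeGroup (Fin n) →* Multiplicative ℤ)
    (hγ : ∀ i : Fin n, γ (FreeGroup.of i) =
      Multiplicative.ofAdd (if (i : ℕ) = 0 then (1 : ℤ) else 0))
    (Ψ : (FreeGroup (Fin n) × Multiplicative ℤ) →* (FreeGroup (Fin n) × Multiplicative ℤ))
    (hΨ : ∀ x : FreeGroup (Fin n) × Multiplicative ℤ,
      Ψ x = (φ x.1, Multiplicative.ofAdd
        ((t : ℤ) * Multiplicative.toAdd x.2 + Multiplicative.toAdd (γ x.1)))) :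
    Nonempty (fixedSubgroup Ψ ≃* FreeGroup (Fin t)) := by
  obtain ⟨m, rfl⟩ : ∃ m, t = m + 1 := ⟨t - 1, by omega⟩
  have : NeZero m := ⟨by omega⟩
  exact ⟨(MulEquiv.subgroupCongr (range_fixedSubgroupParam hn hφ hγ hΨ)).symm.trans <|
    (MonoidHom.ofInjective (fixedSubgroupParam_injective hn m)).symm.trans
      (freeGroupEquivShiftSemidirect m).symm⟩
end

section
/- Let H be a group admitting a surjective homomorphism γ: H → Z, and let m ≥ 1. Then the endomorphism φ_m of H × Z defined by φ_m(u, t) = (u, γ(u) + (m+1)t) has fixed subgroup Fix φ_m = {(u,t) | γ(u) = −mt}, which is isomorphic to the normal subgroup N = {u ∈ H | γ(u) ≡ 0 mod m} of H, and [H : N] = m. -/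
/-!
A pair `(u, t)` is fixed by `φ_m` exactly when `γ u = -m t`. Since `m ≠ 0`, such a `t` is determined
by `u` and exists iff `m ∣ γ u`, so the first projection maps `Fix φ_m` isomorphically onto `N`.
Finally `N` is the preimage of `mℤ` under the surjection `γ`, so `[H : N] = [ℤ : mℤ] = m`.
-/

open Multiplicative Subgroup

theorem Multiplicative.zpowers_ofAdd_eq {A : Type*} [AddGroup A] (a : A) :
    zpowers (ofAdd a) = (AddSubgroup.zmultiples a).toSubgroup := by
  ext x
  rw [← SetLike.mem_coe, ← ofAdd_image_zmultiples_eq_zpowers_ofAdd]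
  exact Set.mem_image_equiv

theorem Multiplicative.index_zpowers_ofAdd (n : ℤ) : (zpowers (ofAdd n)).index = n.natAbs := by
  rw [zpowers_ofAdd_eq, AddSubgroup.index_toSubgroup, Int.index_zmultiples]

theorem Multiplicative.mem_zpowers_ofAdd_iff (n : ℤ) (x : Multiplicative ℤ) :
    x ∈ zpowers (ofAdd n) ↔ n ∣ toAdd x := by
  rw [zpowers_ofAdd_eq, ← Int.mem_zmultiples_iff]
  rfl

section FixedSubgroup

variable {H : Type*} [Group H] {γ : H →* Multiplicative ℤ} {n : ℤ}
  {φ : H × Multiplicative ℤ →* H × Multiplicative ℤ}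

theorem mem_fixedSubgroup_iff_toAdd_eq
    (hφ : ∀ x, φ x = (x.1, ofAdd (toAdd (γ x.1) + (n + 1) * toAdd x.2)))
    (x : H × Multiplicative ℤ) :
    x ∈ fixedSubgroup φ ↔ toAdd (γ x.1) = -n * toAdd x.2 := by
  change φ x = x ↔ _
  rw [hφ, Prod.ext_iff, ← toAdd.injective.eq_iff]
  simp only [toAdd_ofAdd, true_and]
  constructor <;> intro h <;> linarith

theorem fst_comp_fixedSubgroup_subtype_injective
    (hφ : ∀ x, φ x = (x.1, ofAdd (toAdd (γ x.1) + (n + 1) * toAdd x.2))) (hn : n ≠ 0) :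
    Function.Injective ((MonoidHom.fst _ _).comp (fixedSubgroup φ).subtype) := by
  rintro ⟨⟨u, s⟩, hs⟩ ⟨⟨v, t⟩, ht⟩ (huv : u = v)
  subst huv
  rw [mem_fixedSubgroup_iff_toAdd_eq hφ] at hs ht
  have hst : toAdd s = toAdd t := mul_left_cancel₀ (neg_ne_zero.mpr hn) (hs.symm.trans ht)
  simp only [Subtype.mk.injEq, Prod.mk.injEq, true_and]
  exact toAdd.injective hst

theorem range_fst_comp_fixedSubgroup_subtype
    (hφ : ∀ x, φ x = (x.1, ofAdd (toAdd (γ x.1) + (n + 1) * toAdd x.2))) :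
    ((MonoidHom.fst _ _).comp (fixedSubgroup φ).subtype).range = comap γ (zpowers (ofAdd n)) := by
  ext u
  simp only [MonoidHom.mem_range, MonoidHom.coe_comp, Function.comp_apply, Subtype.exists,
    mem_comap, mem_zpowers_ofAdd_iff, mem_fixedSubgroup_iff_toAdd_eq hφ]
  constructor
  · rintro ⟨x, hx, rfl⟩
    exact ⟨-toAdd x.2, by simp only [MonoidHom.coe_fst, coe_subtype, hx]; ring⟩
  · rintro ⟨k, hk⟩
    exact ⟨(u, ofAdd (-k)), by simp [hk], rfl⟩

end FixedSubgroup

theorem stmt18 (H : Type*) [Group H]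
    (γ : H →* Multiplicative ℤ) (hγ : Function.Surjective γ)
    (m : ℕ) (hm : 1 ≤ m)
    (φm : (H × Multiplicative ℤ) →* (H × Multiplicative ℤ))
    (hφm : ∀ x : H × Multiplicative ℤ,
      φm x = (x.1, Multiplicative.ofAdd
        (Multiplicative.toAdd (γ x.1) + ((m : ℤ) + 1) * Multiplicative.toAdd x.2))) :
    (∀ x : H × Multiplicative ℤ, x ∈ fixedSubgroup φm ↔
      Multiplicative.toAdd (γ x.1) = -(m : ℤ) * Multiplicative.toAdd x.2) ∧
    (Subgroup.comap γ (Subgroup.zpowers (Multiplicative.ofAdd (m : ℤ)))).Normal ∧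
    Nonempty (fixedSubgroup φm ≃*
      (Subgroup.comap γ (Subgroup.zpowers (Multiplicative.ofAdd (m : ℤ))))) ∧
    (Subgroup.comap γ (Subgroup.zpowers (Multiplicative.ofAdd (m : ℤ)))).index = m := by
  have hm₀ : (m : ℤ) ≠ 0 := by omega
  refine ⟨mem_fixedSubgroup_iff_toAdd_eq hφm, (zpowers _).normal_of_isMulCommutative.comap γ,
    ⟨(MonoidHom.ofInjective (fst_comp_fixedSubgroup_subtype_injective hφm hm₀)).trans
      (MulEquiv.subgroupCongr (range_fst_comp_fixedSubgroup_subtype hφm))⟩, ?_⟩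
  rw [index_comap_of_surjective _ hγ, index_zpowers_ofAdd, Int.natAbs_natCast]
end

section
/- Let H be a group admitting a surjective homomorphism onto Z, and suppose H is finite index rigid, i.e., H contains no pair of isomorphic finite-index subgroups of different indices. Then H × Z contains, up to isomorphism, infinitely many fixed subgroups of endomorphisms; more precisely, there exists a sequence of endomorphisms (φ_m)_{m≥1} of H × Z whose fixed subgroups are pairwise non-isomorphic. -/
/-- The free abelian group `ℤ^m` of rank `m`, written multiplicatively. -/
abbrev ZPowFree (m : ℕ) := Multiplicative (Fin m → ℤ)

/-!
Given `γ : H ↠ ℤ`, the endomorphism `(h, t) ↦ (h, γ(h) t^(n+1))` of `H × ℤ` fixes exactly the pairs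
with `γ(h) = t^(-n)`. Projecting to `H` identifies this fixed subgroup with `γ⁻¹(nℤ)`, a subgroup of
index `n`; so for distinct `i, j ≥ 1` the fixed subgroups are isomorphic to finite-index subgroups of
`H` of different indices, which finite index rigidity forbids from being isomorphic.
-/

section Shear

variable {G A : Type*} [Group G] [CommGroup A]

def shearEnd (γ : G →* A) (n : ℕ) : G × A →* G × A :=
  (MonoidHom.fst G A).prod (γ.comp (MonoidHom.fst G A) * MonoidHom.snd G A ^ (n + 1))

theorem mem_fixedSubgroup_shearEnd {γ : G →* A} {n : ℕ} {x : G × A} :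
    x ∈ fixedSubgroup (shearEnd γ n) ↔ x.2⁻¹ ^ n = γ x.1 := by
  change (x.1, γ x.1 * x.2 ^ (n + 1)) = x ↔ _
  rw [Prod.ext_iff, pow_succ, ← mul_assoc, mul_eq_right, inv_pow, inv_eq_iff_mul_eq_one,
    mul_comm (x.2 ^ n)]
  exact and_iff_right rfl

theorem range_fst_comp_subtype_fixedSubgroup_shearEnd (γ : G →* A) (n : ℕ) :
    ((MonoidHom.fst G A).comp (fixedSubgroup (shearEnd γ n)).subtype).range =
      (powMonoidHom n : A →* A).range.comap γ := by
  ext g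
  constructor
  · rintro ⟨⟨x, hx⟩, rfl⟩
    exact ⟨x.2⁻¹, mem_fixedSubgroup_shearEnd.mp hx⟩
  · rintro ⟨a, ha⟩
    exact ⟨⟨(g, a⁻¹), mem_fixedSubgroup_shearEnd.mpr (by simpa using ha)⟩, rfl⟩

theorem fst_comp_subtype_fixedSubgroup_shearEnd_injective [IsMulTorsionFree A]
    (γ : G →* A) {n : ℕ} (hn : n ≠ 0) :
    Function.Injective ((MonoidHom.fst G A).comp (fixedSubgroup (shearEnd γ n)).subtype) := by
  rintro ⟨x, hx⟩ ⟨y, hy⟩ (hxy : x.1 = y.1)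
  have hpow : x.2⁻¹ ^ n = y.2⁻¹ ^ n := by
    rw [mem_fixedSubgroup_shearEnd.mp hx, mem_fixedSubgroup_shearEnd.mp hy, hxy]
  exact Subtype.ext (Prod.ext hxy (inv_injective (pow_left_injective hn hpow)))

noncomputable def fixedSubgroupShearEndEquiv [IsMulTorsionFree A] (γ : G →* A) {n : ℕ}
    (hn : n ≠ 0) : fixedSubgroup (shearEnd γ n) ≃* (powMonoidHom n : A →* A).range.comap γ :=
  (MonoidHom.ofInjective (fst_comp_subtype_fixedSubgroup_shearEnd_injective γ hn)).trans
    (MulEquiv.subgroupCongr (range_fst_comp_subtype_fixedSubgroup_shearEnd γ n))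

end Shear

theorem index_comap_range_powMonoidHom {G : Type*} [Group G] {γ : G →* Multiplicative ℤ}
    (hγ : Function.Surjective γ) (n : ℕ) :
    ((powMonoidHom n : Multiplicative ℤ →* Multiplicative ℤ).range.comap γ).index = n := by
  have hrange : (powMonoidHom n : Multiplicative ℤ →* Multiplicative ℤ).range =
      (AddSubgroup.zmultiples (n : ℤ)).toSubgroup := by
    ext a
    simp only [MonoidHom.mem_range, powMonoidHom_apply, Multiplicative.mem_toSubgroup,
      AddSubgroup.mem_zmultiples_iff]
    constructor
    · rintro ⟨b, rfl⟩
      exact ⟨Multiplicative.toAdd b, by simp [mul_comm]⟩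
    · rintro ⟨c, hc⟩
      exact ⟨Multiplicative.ofAdd c, by rw [← ofAdd_toAdd a, ← hc]; simp⟩
  rw [Subgroup.index_comap_of_surjective _ hγ, hrange, AddSubgroup.index_toSubgroup,
    Int.index_zmultiples, Int.natAbs_natCast]

theorem stmt19 (H : Type*) [Group H]
    (hsurj : ∃ γ : H →* Multiplicative ℤ, Function.Surjective γ)
    (hrigid : ∀ K L : Subgroup H, K.index ≠ 0 → L.index ≠ 0 →
      Nonempty (K ≃* L) → K.index = L.index) :
    ∃ φ : ℕ → ((H × Multiplicative ℤ) →* (H × Multiplicative ℤ)),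
      ∀ i j : ℕ, 1 ≤ i → 1 ≤ j → i ≠ j →
        ¬ Nonempty (fixedSubgroup (φ i) ≃* fixedSubgroup (φ j)) := by
  obtain ⟨γ, hγ⟩ := hsurj
  refine ⟨shearEnd γ, fun i j hi hj hij ⟨e⟩ => hij ?_⟩
  have hindex := index_comap_range_powMonoidHom hγ
  rw [← hindex i, ← hindex j]
  refine hrigid _ _ (by rw [hindex]; omega) (by rw [hindex]; omega) ⟨?_⟩
  exact ((fixedSubgroupShearEndEquiv γ (by omega)).symm.trans e).trans
    (fixedSubgroupShearEndEquiv γ (by omega))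
end
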